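/- arXiv:2002.03212 — 3 statements merged into one kernel-verified Lean document; each statement's English description precedes it below -/
import Mathlib

section
/- Let A, B, C, D : GF(2)^n → GF(2) and φ satisfy B = A∘φ, C = B∘φ, D = C∘φ. If P₁ = A·C + B·D is an invariant of φ, then P₂ = A·B·C·D is also an invariant of φ. -/
/-! Write `E := D ∘ φ`. Composing with `φ` shifts the sequence `A, B, C, D` to `B, C, D, E`, so
invariance of `A * C + B * D` says `B * D + C * E = A * C + B * D`, i.e. `C * E = A * C`. Then
`(A * B * C * D) ∘ φ = B * D * (C * E) = B * D * (A * C)`. -/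

section ShiftInvariant

variable {X R : Type*} [CommRing R] (φ : X → X) {A B C D : X → R}

theorem mul_comp_eq_of_add_mul_invariant (hB : B = A ∘ φ) (hC : C = B ∘ φ) (hD : D = C ∘ φ)
    (h : ∀ x, (A * C + B * D) (φ x) = (A * C + B * D) x) (x : X) :
    C x * D (φ x) = A x * C x := by
  have hx := h x
  simp only [Pi.add_apply, Pi.mul_apply, hB, hC, hD, Function.comp_apply] at hx ⊢
  linear_combination hx

theorem mul_mul_mul_invariant_of_add_mul_invariant (hB : B = A ∘ φ) (hC : C = B ∘ φ)
    (hD : D = C ∘ φ) (h : ∀ x, (A * C + B * D) (φ x) = (A * C + B * D) x) (x : X) :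
    (A * B * C * D) (φ x) = (A * B * C * D) x := by
  have key := mul_comp_eq_of_add_mul_invariant φ hB hC hD h x
  have hA : A (φ x) = B x := by rw [hB]; rfl
  have hB' : B (φ x) = C x := by rw [hC]; rfl
  have hC' : C (φ x) = D x := by rw [hD]; rfl
  simp only [Pi.mul_apply, hA, hB', hC']
  linear_combination B x * D x * key

end ShiftInvariant

theorem stmt_5 (n : ℕ) (φ : (Fin n → ZMod 2) → (Fin n → ZMod 2))
    (A B C D : (Fin n → ZMod 2) → ZMod 2)
    (hB : B = A ∘ φ) (hC : C = B ∘ φ) (hD : D = C ∘ φ)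
    (h1 : ∀ x, (A * C + B * D) (φ x) = (A * C + B * D) x) :
    ∀ x, (A * B * C * D) (φ x) = (A * B * C * D) x :=
  mul_mul_mul_invariant_of_add_mul_invariant φ hB hC hD h1
end

section
/- Let A, B, C, D, E, F, G, H : GF(2)^n → GF(2) and φ : GF(2)^n → GF(2)^n satisfy the cycle relations B = A∘φ, C = B∘φ, D = C∘φ, F = E∘φ, G = F∘φ, H = G∘φ, and suppose D(φ(x)) = E(x) + u(x) and H(φ(x)) = A(x) + w(x) for some functions u, w : GF(2)^n → GF(2). If B(x)·C(x)·u(x) = 0 and F(x)·G(x)·w(x) = 0 for all x, then P = A·B·C·D·E·F·G·H is an invariant of φ. -/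
/-!
Applying `φ` shifts each factor of `P = A B C D E F G H` to the next one, except that `D ∘ φ = E + u`
and `H ∘ φ = A + w`. Expanding `(E + u)(A + w)`, every correction term to `P` is a multiple of
`B C u` or of `F G w`, which vanish identically.
-/

theorem mul_shift_eq_of_mul_eq_zero {R : Type*} [CommSemiring R] {a b c d e f g h u w : R}
    (hu : b * c * u = 0) (hw : f * g * w = 0) :
    b * c * d * (e + u) * f * g * h * (a + w) = a * b * c * d * e * f * g * h :=
  calc b * c * d * (e + u) * f * g * h * (a + w)
      = a * b * c * d * e * f * g * h + b * c * u * (d * f * g * h * (a + w))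
          + f * g * w * (b * c * d * e * h) := by ring
    _ = a * b * c * d * e * f * g * h := by rw [hu, hw]; ring

theorem stmt_12 (n : ℕ) (φ : (Fin n → ZMod 2) → (Fin n → ZMod 2))
    (A B C D E F G H u w : (Fin n → ZMod 2) → ZMod 2)
    (hB : B = A ∘ φ) (hC : C = B ∘ φ) (hD : D = C ∘ φ)
    (hF : F = E ∘ φ) (hG : G = F ∘ φ) (hH : H = G ∘ φ)
    (hDE : ∀ x, D (φ x) = E x + u x) (hHA : ∀ x, H (φ x) = A x + w x)
    (hu : ∀ x, B x * C x * u x = 0) (hw : ∀ x, F x * G x * w x = 0) :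
    ∀ x, (A * B * C * D * E * F * G * H) (φ x) = (A * B * C * D * E * F * G * H) x := by
  intro x
  have hA' : A (φ x) = B x := (congrFun hB x).symm
  have hB' : B (φ x) = C x := (congrFun hC x).symm
  have hC' : C (φ x) = D x := (congrFun hD x).symm
  have hE' : E (φ x) = F x := (congrFun hF x).symm
  have hF' : F (φ x) = G x := (congrFun hG x).symm
  have hG' : G (φ x) = H x := (congrFun hH x).symm
  simp only [Pi.mul_apply, hA', hB', hC', hDE, hE', hF', hG', hHA]
  exact mul_shift_eq_of_mul_eq_zero (hu x) (hw x)
end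

section
/- With the hypotheses of the eight-function cycle (B = A∘φ, C = B∘φ, D = C∘φ, F = E∘φ, G = F∘φ, H = G∘φ, D∘φ = E + u, H∘φ = A + w), the difference P(φ(x)) + P(x) for P = A·B·C·D·E·F·G·H equals B·C·D·F·G·H·(E·w + A·u + u·w) pointwise. -/
theorem CharTwo.add_mul_add_add_mul {R : Type*} [CommRing R] [CharP R 2] (a e u w : R) :
    (e + u) * (a + w) + a * e = e * w + a * u + u * w := by
  linear_combination CharTwo.add_self_eq_zero (a * e)

theorem stmt_13 (n : ℕ) (φ : (Fin n → ZMod 2) → (Fin n → ZMod 2))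
    (A B C D E F G H u w : (Fin n → ZMod 2) → ZMod 2)
    (hB : B = A ∘ φ) (hC : C = B ∘ φ) (hD : D = C ∘ φ)
    (hF : F = E ∘ φ) (hG : G = F ∘ φ) (hH : H = G ∘ φ)
    (hDE : ∀ x, D (φ x) = E x + u x) (hHA : ∀ x, H (φ x) = A x + w x) :
    ∀ x, (A * B * C * D * E * F * G * H) (φ x) + (A * B * C * D * E * F * G * H) x =
      B x * C x * D x * F x * G x * H x * (E x * w x + A x * u x + u x * w x) := by
  intro x
  have hAφ : A (φ x) = B x := (congrFun hB x).symm
  have hBφ : B (φ x) = C x := (congrFun hC x).symm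
  have hCφ : C (φ x) = D x := (congrFun hD x).symm
  have hEφ : E (φ x) = F x := (congrFun hF x).symm
  have hFφ : F (φ x) = G x := (congrFun hG x).symm
  have hGφ : G (φ x) = H x := (congrFun hH x).symm
  have hPφ : (A * B * C * D * E * F * G * H) (φ x) =
      B x * C x * D x * F x * G x * H x * ((E x + u x) * (A x + w x)) := by
    simp only [Pi.mul_apply, hAφ, hBφ, hCφ, hDE, hEφ, hFφ, hGφ, hHA]
    ring
  rw [hPφ]
  simp only [Pi.mul_apply]
  linear_combination (B x * C x * D x * F x * G x * H x) *
    CharTwo.add_mul_add_add_mul (A x) (E x) (u x) (w x)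
end
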